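/- arXiv:math/9902043 — 3 statements merged into one kernel-verified Lean document; each statement's English description precedes it below -/
import Mathlib

section
/- There exists a constant c > 0 such that for all sufficiently large n, the expectation μ_n of the minimum triangle area A satisfies μ_n > c/n³. -/
open MeasureTheory

/-- Area of the triangle with vertices `P`, `Q`, `R` in the plane:
`½ · |det (Q - P, R - P)|`. -/
noncomputable def triArea (P Q R : ℝ × ℝ) : ℝ :=
  |(Q.1 - P.1) * (R.2 - P.2) - (Q.2 - P.2) * (R.1 - P.1)| / 2

/-- Minimum area of a triangle formed by three of the points `x 0, …, x (n-1)`. -/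
noncomputable def minTriArea (n : ℕ) (x : Fin n → ℝ × ℝ) : ℝ :=
  sInf {a | ∃ i j k : Fin n, i < j ∧ j < k ∧ a = triArea (x i) (x j) (x k)}

/-- Uniform probability measure on the unit square `[0,1]²`. -/
noncomputable def unifSq : Measure (ℝ × ℝ) :=
  volume.restrict (Set.Icc ((0, 0) : ℝ × ℝ) (1, 1))

/-- Joint distribution of `n` points chosen independently and uniformly in `[0,1]²`. -/
noncomputable def μpts (n : ℕ) : Measure (Fin n → ℝ × ℝ) :=
  Measure.pi fun _ => unifSq

/-!
Given `P` and `Q`, the triangle `PQR` has area at most `t` exactly when `R` lies in a strip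
around the line `PQ` whose width, measured along a coordinate axis, is `4t / ‖Q - P‖` (sup norm);
so it has probability at most `4t / ‖Q - P‖`, and since `E ‖Q - P‖⁻¹ ≤ 4` three independent
uniform points span area at most `t` with probability at most `16t`. A union bound over the
at most `n³` triples with `t = 1/(32n³)` shows that `A ≥ t` with probability at least `1/2`,
hence `μ_n ≥ t/2 = 1/(64n³)` by Markov's inequality.
-/

open ProbabilityTheory Set Metric
open scoped ENNReal

noncomputable def unifI : Measure ℝ := volume.restrict (Icc 0 1)

instance : IsProbabilityMeasure unifI := ⟨by simp [unifI]⟩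

lemma unifSq_eq_prod : unifSq = unifI.prod unifI := by
  rw [unifI, Measure.prod_restrict, ← Measure.volume_eq_prod, unifSq, Icc_prod_eq]

instance : IsProbabilityMeasure unifSq := unifSq_eq_prod ▸ inferInstance

instance : NullSingletonClass unifSq := by
  unfold unifSq; infer_instance

instance (n : ℕ) : IsProbabilityMeasure (μpts n) := by
  unfold μpts; infer_instance

lemma unifI_closedBall_le (q r : ℝ) : unifI (closedBall q r) ≤ ENNReal.ofReal (2 * r) :=
  (Measure.restrict_le_self _).trans_eq (Real.volume_closedBall q r)

lemma measurePreserving_swap_unifSq : MeasurePreserving Prod.swap unifSq unifSq :=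
  unifSq_eq_prod ▸ Measure.measurePreserving_swap

lemma volume_setOf_abs_mul_sub_le {a : ℝ} (ha : a ≠ 0) (c s : ℝ) :
    volume {y : ℝ | |a * y - c| ≤ s} = ENNReal.ofReal (2 * s / |a|) := by
  have : {y : ℝ | |a * y - c| ≤ s} = (a * ·) ⁻¹' closedBall c s := by
    ext; simp [Real.dist_eq]
  rw [this, Real.volume_preimage_mul_left ha, Real.volume_closedBall,
    ← ENNReal.ofReal_mul (abs_nonneg _), abs_inv, inv_mul_eq_div]

lemma unifSq_strip_le_of_fst_ne_zero {a : ℝ} (ha : a ≠ 0) (b d s : ℝ) :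
    unifSq {R : ℝ × ℝ | |a * R.2 - b * R.1 - d| ≤ s} ≤ ENNReal.ofReal (2 * s / |a|) := by
  rw [unifSq_eq_prod, Measure.prod_apply (measurableSet_le (by fun_prop) measurable_const)]
  refine lintegral_le_const (ae_of_all _ fun x => (Measure.restrict_le_self _).trans_eq ?_)
  rw [← volume_setOf_abs_mul_sub_le ha (b * x + d) s]
  congr 1; ext y; simp only [mem_preimage, mem_ofPred_eq, sub_sub]

lemma unifSq_strip_le_of_snd_ne_zero {b : ℝ} (hb : b ≠ 0) (a d s : ℝ) :
    unifSq {R : ℝ × ℝ | |a * R.2 - b * R.1 - d| ≤ s} ≤ ENNReal.ofReal (2 * s / |b|) := by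
  have hswap : {R : ℝ × ℝ | |a * R.2 - b * R.1 - d| ≤ s} =
      Prod.swap ⁻¹' {R | |b * R.2 - a * R.1 - -d| ≤ s} := by
    ext R
    rw [mem_preimage, mem_ofPred_eq, mem_ofPred_eq, Prod.fst_swap, Prod.snd_swap, ← abs_neg]
    ring_nf
  rw [hswap, measurePreserving_swap_unifSq.measure_preimage
    (measurableSet_le (by fun_prop) measurable_const).nullMeasurableSet]
  exact unifSq_strip_le_of_fst_ne_zero hb a (-d) s

lemma unifSq_strip_le {v : ℝ × ℝ} (hv : v ≠ 0) (d s : ℝ) :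
    unifSq {R : ℝ × ℝ | |v.1 * R.2 - v.2 * R.1 - d| ≤ s} ≤ ENNReal.ofReal (2 * s / ‖v‖) := by
  rw [Prod.norm_def, Real.norm_eq_abs, Real.norm_eq_abs]
  rcases le_total |v.1| |v.2| with h | h
  · rw [max_eq_right h]
    exact unifSq_strip_le_of_snd_ne_zero (fun h2 => hv (Prod.ext (by simpa [h2] using h) h2)) _ _ _
  · rw [max_eq_left h]
    exact unifSq_strip_le_of_fst_ne_zero (fun h1 => hv (Prod.ext h1 (by simpa [h1] using h))) _ _ _

lemma unifSq_triArea_le {P Q : ℝ × ℝ} (hPQ : Q ≠ P) (t : ℝ) :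
    unifSq {R | triArea P Q R ≤ t} ≤ ENNReal.ofReal (4 * t / dist Q P) := by
  have hstrip : {R | triArea P Q R ≤ t} = {R : ℝ × ℝ |
      |(Q - P).1 * R.2 - (Q - P).2 * R.1 - ((Q - P).1 * P.2 - (Q - P).2 * P.1)| ≤ 2 * t} := by
    ext R
    simp only [triArea, mem_ofPred_eq, Prod.fst_sub, Prod.snd_sub, div_le_iff₀ (two_pos (α := ℝ))]
    ring_nf
  rw [hstrip, dist_eq_norm, show 4 * t = 2 * (2 * t) by ring]
  exact unifSq_strip_le (sub_ne_zero.2 hPQ) _ _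

lemma lintegral_inv_abs_fst_le (p : ℝ × ℝ) :
    ∫⁻ Q, (if |Q.2 - p.2| ≤ |Q.1 - p.1| then ENNReal.ofReal |Q.1 - p.1|⁻¹ else 0) ∂unifSq
      ≤ 2 := by
  rw [unifSq_eq_prod, lintegral_prod _ (Measurable.aemeasurable (Measurable.ite
    (measurableSet_le (by fun_prop) (by fun_prop)) (by fun_prop) measurable_const))]
  refine lintegral_le_const (ae_of_all _ fun x => ?_)
  have hslice : (fun y => if |y - p.2| ≤ |x - p.1| then ENNReal.ofReal |x - p.1|⁻¹ else 0) =
      (closedBall p.2 |x - p.1|).indicator (fun _ => ENNReal.ofReal |x - p.1|⁻¹) := by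
    ext y; simp only [indicator, mem_closedBall, Real.dist_eq]
  rw [hslice, lintegral_indicator_const measurableSet_closedBall]
  calc ENNReal.ofReal |x - p.1|⁻¹ * unifI (closedBall p.2 |x - p.1|)
      ≤ ENNReal.ofReal |x - p.1|⁻¹ * ENNReal.ofReal (2 * |x - p.1|) := by
        gcongr; exact unifI_closedBall_le _ _
    _ = ENNReal.ofReal (|x - p.1|⁻¹ * (2 * |x - p.1|)) :=
        (ENNReal.ofReal_mul (by positivity)).symm
    _ ≤ 2 := by
        rw [ENNReal.ofReal_le_iff_le_toReal (by simp), ENNReal.toReal_ofNat]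
        rcases eq_or_ne |x - p.1| 0 with h | h
        · simp [h]
        · rw [mul_left_comm, inv_mul_cancel₀ h, mul_one]

-- `dist` on `ℝ × ℝ` is the sup distance; the swap symmetry of the square reduces the case where
-- the second coordinate realizes it to the first.
lemma lintegral_inv_dist_le (p : ℝ × ℝ) : ∫⁻ Q, ENNReal.ofReal (dist Q p)⁻¹ ∂unifSq ≤ 4 := by
  set f : ℝ × ℝ → ℝ × ℝ → ℝ≥0∞ := fun p Q =>
    if |Q.2 - p.2| ≤ |Q.1 - p.1| then ENNReal.ofReal |Q.1 - p.1|⁻¹ else 0 with hf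
  have hle : ∀ Q, ENNReal.ofReal (dist Q p)⁻¹ ≤ f p Q + f p.swap Q.swap := by
    intro Q
    rw [Prod.dist_eq, Real.dist_eq, Real.dist_eq]
    rcases le_total |Q.2 - p.2| |Q.1 - p.1| with h | h
    · simp only [hf, max_eq_left h, if_pos h]
      exact le_self_add
    · simp only [hf, max_eq_right h, Prod.fst_swap, Prod.snd_swap, if_pos h]
      exact le_add_self
  have hfm : Measurable (f p) := Measurable.ite
    (measurableSet_le (by fun_prop) (by fun_prop)) (by fun_prop) measurable_const
  calc ∫⁻ Q, ENNReal.ofReal (dist Q p)⁻¹ ∂unifSq ≤ ∫⁻ Q, f p Q + f p.swap Q.swap ∂unifSq :=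
        lintegral_mono hle
    _ = ∫⁻ Q, f p Q ∂unifSq + ∫⁻ Q, f p.swap Q ∂unifSq := by
        rw [lintegral_add_left hfm, measurePreserving_swap_unifSq.lintegral_comp_emb
          MeasurableEquiv.prodComm.measurableEmbedding]
    _ ≤ 2 + 2 := add_le_add (lintegral_inv_abs_fst_le p) (lintegral_inv_abs_fst_le _)
    _ = 4 := by norm_num

lemma unifSq_prod_triArea_le {t : ℝ} (ht : 0 ≤ t) :
    (unifSq.prod (unifSq.prod unifSq)) {z | triArea z.1 z.2.1 z.2.2 ≤ t}
      ≤ ENNReal.ofReal (16 * t) := by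
  have hS : MeasurableSet {z : (ℝ × ℝ) × (ℝ × ℝ) × (ℝ × ℝ) | triArea z.1 z.2.1 z.2.2 ≤ t} :=
    measurableSet_le (by unfold triArea; fun_prop) measurable_const
  rw [Measure.prod_apply hS]
  refine lintegral_le_const (ae_of_all _ fun P => ?_)
  rw [Measure.prod_apply (measurable_prodMk_left hS)]
  calc ∫⁻ Q, unifSq {R | triArea P Q R ≤ t} ∂unifSq
      ≤ ∫⁻ Q, ENNReal.ofReal (4 * t) * ENNReal.ofReal (dist Q P)⁻¹ ∂unifSq := by
        refine lintegral_mono_ae ((Measure.ae_ne unifSq P).mono fun Q hQ => ?_)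
        rw [← ENNReal.ofReal_mul (by positivity), ← div_eq_mul_inv]
        exact unifSq_triArea_le hQ t
    _ = ENNReal.ofReal (4 * t) * ∫⁻ Q, ENNReal.ofReal (dist Q P)⁻¹ ∂unifSq :=
        lintegral_const_mul' _ _ ENNReal.ofReal_ne_top
    _ ≤ ENNReal.ofReal (4 * t) * 4 := by gcongr; exact lintegral_inv_dist_le P
    _ = ENNReal.ofReal (16 * t) := by
        rw [← ENNReal.ofReal_ofNat 4, ← ENNReal.ofReal_mul (by positivity)]; ring_nf

lemma map_μpts_eval_three {n : ℕ} {i j k : Fin n} (hij : i ≠ j) (hik : i ≠ k) (hjk : j ≠ k) :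
    (μpts n).map (fun x => (x i, x j, x k)) = unifSq.prod (unifSq.prod unifSq) := by
  have hindep : iIndepFun (fun l (x : Fin n → ℝ × ℝ) => x l) (μpts n) :=
    iIndepFun_pi (X := fun _ => id) fun _ => aemeasurable_id
  have hmeas : ∀ l, Measurable fun x : Fin n → ℝ × ℝ => x l := measurable_pi_apply
  have hlaw : ∀ l, (μpts n).map (fun x => x l) = unifSq := fun l =>
    (measurePreserving_eval (fun _ => unifSq) l).map_eq
  rw [((hindep.indepFun_prodMk hmeas j k i hij.symm hik.symm).symm).map_prod_eq_prod_map_map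
      (hmeas i).aemeasurable ((hmeas j).prodMk (hmeas k)).aemeasurable,
    (hindep.indepFun hjk).map_prod_eq_prod_map_map (hmeas j).aemeasurable (hmeas k).aemeasurable,
    hlaw, hlaw, hlaw]

lemma μpts_triArea_le {n : ℕ} {i j k : Fin n} (hij : i ≠ j) (hik : i ≠ k) (hjk : j ≠ k)
    {t : ℝ} (ht : 0 ≤ t) :
    μpts n {x | triArea (x i) (x j) (x k) ≤ t} ≤ ENNReal.ofReal (16 * t) := by
  have hmeas : Measurable fun x : Fin n → ℝ × ℝ => (x i, x j, x k) := by fun_prop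
  have hS : MeasurableSet {z : (ℝ × ℝ) × (ℝ × ℝ) × (ℝ × ℝ) | triArea z.1 z.2.1 z.2.2 ≤ t} :=
    measurableSet_le (by unfold triArea; fun_prop) measurable_const
  calc μpts n {x | triArea (x i) (x j) (x k) ≤ t}
      = (μpts n).map (fun x => (x i, x j, x k)) {z | triArea z.1 z.2.1 z.2.2 ≤ t} :=
        (Measure.map_apply hmeas hS).symm
    _ ≤ ENNReal.ofReal (16 * t) := map_μpts_eval_three hij hik hjk ▸ unifSq_prod_triArea_le ht

def increasingTriples (n : ℕ) : Finset (Fin n × Fin n × Fin n) :=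
  Finset.univ.filter fun p => p.1 < p.2.1 ∧ p.2.1 < p.2.2

lemma increasingTriples_nonempty {n : ℕ} (hn : 3 ≤ n) : (increasingTriples n).Nonempty :=
  ⟨(⟨0, by omega⟩, ⟨1, by omega⟩, ⟨2, by omega⟩), by simp [increasingTriples]⟩

lemma card_increasingTriples_le (n : ℕ) : (increasingTriples n).card ≤ n ^ 3 :=
  (Finset.card_filter_le _ _).trans_eq (by simp [Finset.card_univ]; ring)

lemma minTriArea_eq_inf' {n : ℕ} (hn : 3 ≤ n) (x : Fin n → ℝ × ℝ) :
    minTriArea n x = (increasingTriples n).inf' (increasingTriples_nonempty hn)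
      fun p => triArea (x p.1) (x p.2.1) (x p.2.2) := by
  rw [Finset.inf'_eq_csInf_image, minTriArea]
  congr 1
  ext a
  simp only [increasingTriples, mem_ofPred_eq, Finset.mem_coe, Finset.mem_filter, Finset.mem_univ,
    true_and, mem_image, Prod.exists]
  constructor
  · rintro ⟨i, j, k, hij, hjk, rfl⟩
    exact ⟨i, j, k, ⟨hij, hjk⟩, rfl⟩
  · rintro ⟨i, j, k, ⟨hij, hjk⟩, rfl⟩
    exact ⟨i, j, k, hij, hjk, rfl⟩

lemma continuous_minTriArea {n : ℕ} (hn : 3 ≤ n) : Continuous (minTriArea n) := by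
  simp_rw [funext (minTriArea_eq_inf' hn)]
  exact Continuous.finset_inf'_apply _ fun p _ => by unfold triArea; fun_prop

lemma minTriArea_nonneg {n : ℕ} (hn : 3 ≤ n) (x : Fin n → ℝ × ℝ) : 0 ≤ minTriArea n x := by
  rw [minTriArea_eq_inf' hn]
  exact Finset.le_inf' _ _ fun _ _ => by unfold triArea; positivity

lemma triArea_le_one {P Q R : ℝ × ℝ} (hP : P ∈ Icc ((0, 0) : ℝ × ℝ) (1, 1))
    (hQ : Q ∈ Icc ((0, 0) : ℝ × ℝ) (1, 1)) (hR : R ∈ Icc ((0, 0) : ℝ × ℝ) (1, 1)) :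
    triArea P Q R ≤ 1 := by
  have hsub : ∀ {A B : ℝ × ℝ}, A ∈ Icc ((0, 0) : ℝ × ℝ) (1, 1) → B ∈ Icc ((0, 0) : ℝ × ℝ) (1, 1) →
      |A.1 - B.1| ≤ 1 ∧ |A.2 - B.2| ≤ 1 := fun hA hB =>
    ⟨abs_sub_le_of_nonneg_of_le hA.1.1 hA.2.1 hB.1.1 hB.2.1,
      abs_sub_le_of_nonneg_of_le hA.1.2 hA.2.2 hB.1.2 hB.2.2⟩
  obtain ⟨hQ1, hQ2⟩ := hsub hQ hP
  obtain ⟨hR1, hR2⟩ := hsub hR hP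
  rw [triArea, div_le_one two_pos]
  calc |(Q.1 - P.1) * (R.2 - P.2) - (Q.2 - P.2) * (R.1 - P.1)|
      ≤ |Q.1 - P.1| * |R.2 - P.2| + |Q.2 - P.2| * |R.1 - P.1| := by
        rw [← abs_mul, ← abs_mul]; exact abs_sub _ _
    _ ≤ 1 * 1 + 1 * 1 := by gcongr
    _ = 2 := by norm_num

lemma integrable_minTriArea {n : ℕ} (hn : 3 ≤ n) : Integrable (minTriArea n) (μpts n) := by
  have hbox : ∀ᵐ x ∂μpts n, ∀ l, x l ∈ Icc ((0, 0) : ℝ × ℝ) (1, 1) :=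
    ae_all_iff.2 fun _ => Measure.tendsto_eval_ae_ae.eventually (ae_restrict_mem measurableSet_Icc)
  refine Integrable.mono' (integrable_const 1) (continuous_minTriArea hn).aestronglyMeasurable ?_
  filter_upwards [hbox] with x hx
  obtain ⟨p, hp⟩ := increasingTriples_nonempty hn
  rw [Real.norm_eq_abs, abs_of_nonneg (minTriArea_nonneg hn x), minTriArea_eq_inf' hn]
  exact (Finset.inf'_le _ hp).trans (triArea_le_one (hx _) (hx _) (hx _))

lemma μpts_minTriArea_lt_le {n : ℕ} (hn : 3 ≤ n) {t : ℝ} (ht : 0 ≤ t) :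
    μpts n {x | minTriArea n x < t} ≤ ENNReal.ofReal (16 * n ^ 3 * t) := by
  have hcover : {x | minTriArea n x < t} ⊆
      ⋃ p ∈ increasingTriples n, {x | triArea (x p.1) (x p.2.1) (x p.2.2) ≤ t} := by
    intro x hx
    rw [mem_ofPred_eq, minTriArea_eq_inf' hn, Finset.inf'_lt_iff] at hx
    obtain ⟨p, hp, hlt⟩ := hx
    exact mem_iUnion₂.2 ⟨p, hp, hlt.le⟩
  calc μpts n {x | minTriArea n x < t}
      ≤ ∑ p ∈ increasingTriples n, μpts n {x | triArea (x p.1) (x p.2.1) (x p.2.2) ≤ t} :=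
        (measure_mono hcover).trans (measure_biUnion_finset_le _ _)
    _ ≤ ∑ _p ∈ increasingTriples n, ENNReal.ofReal (16 * t) := by
        refine Finset.sum_le_sum fun p hp => ?_
        obtain ⟨hij, hjk⟩ := (Finset.mem_filter.1 hp).2
        exact μpts_triArea_le hij.ne (hij.trans hjk).ne hjk.ne ht
    _ ≤ (n ^ 3 : ℕ) * ENNReal.ofReal (16 * t) := by
        rw [Finset.sum_const, nsmul_eq_mul]
        gcongr
        exact_mod_cast card_increasingTriples_le n
    _ = ENNReal.ofReal (16 * n ^ 3 * t) := by
        rw [← ENNReal.ofReal_natCast, ← ENNReal.ofReal_mul (by positivity)]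
        push_cast; ring_nf

theorem expected_min_triangle_area_lower_bound :
    ∃ c : ℝ, 0 < c ∧ ∃ N : ℕ, ∀ n : ℕ, N ≤ n →
      c / (n : ℝ) ^ 3 < ∫ x, minTriArea n x ∂(μpts n) := by
  refine ⟨1 / 65, by norm_num, 3, fun n hn => ?_⟩
  set t : ℝ := 1 / (32 * n ^ 3) with ht
  have hbad : (μpts n).real {x | minTriArea n x < t} ≤ 1 / 2 := by
    refine ENNReal.toReal_le_of_le_ofReal (by norm_num) ?_
    convert μpts_minTriArea_lt_le hn (by positivity : 0 ≤ t) using 2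
    rw [ht]; field_simp; norm_num
  have hgood : 1 / 2 ≤ (μpts n).real {x | t ≤ minTriArea n x} := by
    have hcompl : {x | t ≤ minTriArea n x} = {x | minTriArea n x < t}ᶜ := by ext; simp
    rw [hcompl, probReal_compl_eq_one_sub
      (measurableSet_lt (continuous_minTriArea hn).measurable measurable_const)]
    linarith
  calc 1 / 65 / (n : ℝ) ^ 3 < t * (1 / 2) := by
        rw [ht]; field_simp; linarith
    _ ≤ t * (μpts n).real {x | t ≤ minTriArea n x} := by gcongr
    _ ≤ ∫ x, minTriArea n x ∂(μpts n) :=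
        mul_meas_ge_le_integral_of_nonneg (ae_of_all _ (minTriArea_nonneg hn))
          (integrable_minTriArea hn) t
end

section
/- Let α be a type and U : List Bool → Option α any function (a fixed decoder). Let S be a finite set of elements of α with cardinality m ≥ 1, and let δ be a positive integer with δ ≤ ⌊log₂ m⌋. Then the number of elements x ∈ S such that no binary string p with length(p) < ⌊log₂ m⌋ − δ satisfies U(p) = some x is at least m·(1 − 2^{−δ}) + 1. -/
/-!
There are only `2 ^ t - 1` binary strings of length `< t`, so at most that many elements are
describable in fewer than `t` bits. With `t = ⌊log₂ m⌋ - δ` we have `2 ^ t ≤ m / 2 ^ δ`, hence at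
least `m - m / 2 ^ δ + 1` elements of `S` are not describable.
-/

open Finset

theorem List.ncard_setOf_length_lt (α : Type*) [Fintype α] (n : ℕ) :
    {l : List α | l.length < n}.ncard = ∑ i ∈ Finset.range n, Fintype.card α ^ i := by
  induction n with
  | zero => simp
  | succ n ih =>
    have hsplit : {l : List α | l.length < n + 1} =
        {l : List α | l.length < n} ∪ {l | l.length = n} := by
      ext l; simp only [Set.mem_union, Set.mem_ofPred_eq]; omega
    rw [hsplit, Set.ncard_union_eq (Set.disjoint_left.mpr fun _ hlt heq => hlt.ne heq)
        (finite_length_lt α n) (finite_length_eq α n),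
      ih, Finset.sum_range_succ, ← Nat.card_coe_set_eq, Set.coe_ofPred, ← List.Vector,
      Nat.card_eq_fintype_card, card_vector]

open Classical in
theorem card_filter_exists_mem_eq_some_le {α β : Type*} (U : β → Option α) {D : Set β}
    (hD : D.Finite) (S : Finset α) :
    #{x ∈ S | ∃ p ∈ D, U p = some x} ≤ D.ncard := by
  rw [Set.ncard_eq_toFinset_card D hD]
  calc #{x ∈ S | ∃ p ∈ D, U p = some x}
      ≤ #(hD.toFinset.image U) :=
        card_le_card_of_injOn some (fun x hx => by
          obtain ⟨p, hp, hpx⟩ := (mem_filter.mp hx).2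
          exact mem_image.mpr ⟨p, hD.mem_toFinset.mpr hp, hpx⟩) (Option.some_injective α).injOn
    _ ≤ #hD.toFinset := card_image_le

open Classical in
theorem card_filter_describable_le {α : Type*} (U : List Bool → Option α) (S : Finset α) (t : ℕ) :
    #{x ∈ S | ∃ p : List Bool, p.length < t ∧ U p = some x} ≤ 2 ^ t - 1 := by
  have h := card_filter_exists_mem_eq_some_le U (List.finite_length_lt Bool t) S
  rwa [List.ncard_setOf_length_lt, Fintype.card_bool, Nat.geomSum_eq le_rfl, Nat.add_one_sub_one,
    Nat.div_one] at h

open Classical in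
theorem incompressibility_general {α : Type*} (U : List Bool → Option α) (S : Finset α) (m : ℕ)
    (hSm : S.card = m) (hm : 1 ≤ m) (δ : ℕ) (hδm : δ ≤ Nat.log 2 m) :
    (m : ℝ) * (1 - 1 / 2 ^ δ) + 1 ≤
      ((S.filter fun x =>
        ¬ ∃ p : List Bool, p.length < Nat.log 2 m - δ ∧ U p = some x).card : ℝ) := by
  set t := Nat.log 2 m - δ
  have hcompressible := card_filter_describable_le U S t
  have hsplit := card_filter_add_card_filter_not (s := S)
    (p := fun x => ∃ p : List Bool, p.length < t ∧ U p = some x)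
  have hcount : m + 1 ≤ #{x ∈ S | ¬ ∃ p : List Bool, p.length < t ∧ U p = some x} + 2 ^ t := by
    have := Nat.one_le_two_pow (n := t)
    omega
  have hpow : (2 : ℝ) ^ t * 2 ^ δ ≤ m := by
    rw [← pow_add, Nat.sub_add_cancel hδm]
    exact_mod_cast Nat.pow_log_le_self 2 (by omega)
  have hm_div : (m : ℝ) * (1 - 1 / 2 ^ δ) = m - m / 2 ^ δ := by ring
  have ht : (2 : ℝ) ^ t ≤ m / 2 ^ δ := by rwa [le_div_iff₀ (by positivity)]
  have hcount_real : ((m + 1 : ℕ) : ℝ) ≤ ((_ + 2 ^ t : ℕ) : ℝ) := Nat.cast_le.mpr hcount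
  push_cast at hcount_real
  linarith

open Classical in
/-- Counting incompressible elements: for any decoder `U`, any finite set `S` of
cardinality `m ≥ 1` and any positive integer `δ ≤ ⌊log₂ m⌋`, at least
`m·(1 − 2^{−δ}) + 1` elements of `S` are not the output of `U` on any binary string
of length less than `⌊log₂ m⌋ − δ`. -/
theorem incompressibility {α : Type*} (U : List Bool → Option α) (S : Finset α) (m : ℕ)
    (hSm : S.card = m) (hm : 1 ≤ m) (δ : ℕ) (hδ : 0 < δ) (hδm : δ ≤ Nat.log 2 m) :
    (m : ℝ) * (1 - 1 / 2 ^ δ) + 1 ≤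
      ((S.filter fun x =>
        ¬ ∃ p : List Bool, p.length < Nat.log 2 m - δ ∧ U p = some x).card : ℝ) :=
  incompressibility_general U S m hSm hm δ hδm
end

section
/- For all integers n ≥ 3 and K ≥ 2, the number of n-element subsets of the K×K grid that contain three distinct collinear points is at most binom(K², n−1) · binom(n−1, 2) · K. -/
/-- The `K × K` grid `{0, 1, …, K−1}² ⊆ ℤ²`. -/
def grid (K : ℕ) : Finset (ℤ × ℤ) :=
  (Finset.range K ×ˢ Finset.range K).image fun p => ((p.1 : ℤ), (p.2 : ℤ))

/-- A grid point viewed as a point of `ℝ²`. -/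
def toR (p : ℤ × ℤ) : ℝ × ℝ := ((p.1 : ℝ), (p.2 : ℝ))

/-
Removing one point `R` of a collinear triple `P, Q, R` from an `n`-subset `S` leaves an
`(n-1)`-subset `T` of the grid containing the pair `{P, Q}`, and `S = T ∪ {R}` with `R` a grid point
on the line `PQ`. There are `binom(K², n-1)` choices of `T`, `binom(n-1, 2)` of the pair, and at most
`K` of `R`, because a line meets the `K × K` grid in at most `K` points: it is injectively
projected to one of the two coordinate axes.
-/

open scoped Finset

lemma grid_eq_Ico (K : ℕ) : grid K = Finset.Ico (0 : ℤ) K ×ˢ Finset.Ico (0 : ℤ) K := by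
  ext ⟨x, y⟩
  simp only [grid, Finset.mem_image, Finset.mem_product, Finset.mem_range, Finset.mem_Ico,
    Prod.mk.injEq, Prod.exists]
  constructor
  · rintro ⟨a, b, ⟨ha, hb⟩, rfl, rfl⟩
    omega
  · rintro ⟨⟨hx0, hxK⟩, hy0, hyK⟩
    exact ⟨x.toNat, y.toNat, by omega, by omega, by omega⟩

lemma card_grid (K : ℕ) : #(grid K) = K ^ 2 := by
  simp [grid_eq_Ico, sq]

lemma card_le_of_subset_grid_of_injOn {K : ℕ} {s : Finset (ℤ × ℤ)} (hs : s ⊆ grid K)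
    {f : ℤ × ℤ → ℤ} (hf : f = Prod.fst ∨ f = Prod.snd) (hinj : Set.InjOn f s) : #s ≤ K := by
  have hmaps : Set.MapsTo f s (Finset.Ico (0 : ℤ) K) := by
    intro p hp
    have hp := Finset.mem_product.1 (grid_eq_Ico K ▸ hs hp)
    rcases hf with rfl | rfl
    exacts [hp.1, hp.2]
  simpa using Finset.card_le_card_of_injOn f hmaps hinj

lemma Collinear.cross_eq {k : Type*} [Field k] {a b c : k × k} (h : Collinear k {a, b, c}) :
    (b.1 - a.1) * (c.2 - a.2) = (b.2 - a.2) * (c.1 - a.1) := by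
  obtain ⟨v, hv⟩ := (collinear_iff_of_mem (Set.mem_insert a _)).1 h
  obtain ⟨r, rfl⟩ := hv b (by simp)
  obtain ⟨s, rfl⟩ := hv c (by simp)
  simp only [vadd_eq_add, Prod.fst_add, Prod.snd_add, Prod.smul_fst, Prod.smul_snd, smul_eq_mul]
  ring

lemma cross_eq_of_collinear_toR {P Q R : ℤ × ℤ}
    (h : Collinear ℝ ({toR P, toR Q, toR R} : Set (ℝ × ℝ))) :
    (Q.1 - P.1) * (R.2 - P.2) = (Q.2 - P.2) * (R.1 - P.1) := by
  have := h.cross_eq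
  simp only [toR] at this
  exact_mod_cast this

lemma card_le_of_subset_grid_of_mem_line {K : ℕ} {P Q : ℤ × ℤ} (hPQ : P ≠ Q)
    {s : Finset (ℤ × ℤ)} (hs : s ⊆ grid K)
    (hline : ∀ R ∈ s, (Q.1 - P.1) * (R.2 - P.2) = (Q.2 - P.2) * (R.1 - P.1)) : #s ≤ K := by
  by_cases hx : P.1 = Q.1
  · have hy : Q.2 - P.2 ≠ 0 := fun h => hPQ (Prod.ext hx (by omega))
    have hvert : ∀ R ∈ s, R.1 = P.1 := fun R hR => by
      have := hline R hR
      rw [hx, sub_self, zero_mul, eq_comm, mul_eq_zero] at this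
      omega
    refine card_le_of_subset_grid_of_injOn hs (.inr rfl) fun R hR R' hR' h => ?_
    exact Prod.ext ((hvert R hR).trans (hvert R' hR').symm) h
  · refine card_le_of_subset_grid_of_injOn hs (.inl rfl) fun R hR R' hR' h => ?_
    have : (Q.1 - P.1) * (R.2 - R'.2) = 0 := by
      linear_combination hline R hR - hline R' hR' + (Q.2 - P.2) * h
    exact Prod.ext h (by rcases mul_eq_zero.1 this with h' | h' <;> omega)

section

open Classical

noncomputable def collinearExtensions (K : ℕ) (A : Finset (ℤ × ℤ)) : Finset (ℤ × ℤ) :=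
  (grid K).filter fun R => Collinear ℝ (toR '' ↑(insert R A))

lemma toR_image_insert_pair (P Q R : ℤ × ℤ) :
    toR '' ↑(insert R {P, Q} : Finset (ℤ × ℤ)) = {toR P, toR Q, toR R} := by
  rw [Finset.coe_insert, Finset.coe_pair, Set.image_insert_eq, Set.image_pair, Set.insert_comm,
    Set.pair_comm (toR R), Set.insert_comm]

lemma card_collinearExtensions_le (K : ℕ) {A : Finset (ℤ × ℤ)} (hA : #A = 2) :
    #(collinearExtensions K A) ≤ K := by
  obtain ⟨P, Q, hPQ, rfl⟩ := Finset.card_eq_two.1 hA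
  refine card_le_of_subset_grid_of_mem_line hPQ (Finset.filter_subset _ _) fun R hR => ?_
  rw [collinearExtensions, Finset.mem_filter, toR_image_insert_pair] at hR
  exact cross_eq_of_collinear_toR hR.2

lemma filter_collinear_subset_biUnion (n K : ℕ) :
    (((grid K).powersetCard n).filter fun S => ∃ P ∈ S, ∃ Q ∈ S, ∃ R ∈ S,
        P ≠ Q ∧ P ≠ R ∧ Q ≠ R ∧ Collinear ℝ ({toR P, toR Q, toR R} : Set (ℝ × ℝ))) ⊆
      ((grid K).powersetCard (n - 1)).biUnion fun T =>
        (T.powersetCard 2).biUnion fun A => (collinearExtensions K A).image (insert · T) := by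
  intro S hS
  obtain ⟨hSn, P, hP, Q, hQ, R, hR, hPQ, hPR, hQR, hcol⟩ := Finset.mem_filter.1 hS
  obtain ⟨hSK, rfl⟩ := Finset.mem_powersetCard.1 hSn
  simp only [Finset.mem_biUnion, Finset.mem_image, Finset.mem_powersetCard]
  refine ⟨S.erase R, ⟨(Finset.erase_subset R S).trans hSK, Finset.card_erase_of_mem hR⟩,
    {P, Q}, ⟨?_, Finset.card_pair hPQ⟩, R, ?_, Finset.insert_erase hR⟩
  · rw [Finset.insert_subset_iff, Finset.singleton_subset_iff]
    exact ⟨Finset.mem_erase.2 ⟨hPR, hP⟩, Finset.mem_erase.2 ⟨hQR, hQ⟩⟩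
  · rw [collinearExtensions, Finset.mem_filter, toR_image_insert_pair]
    exact ⟨hSK hR, hcol⟩

end

open Classical in
theorem count_collinear_subsets_le_general (n K : ℕ) :
    (((grid K).powersetCard n).filter fun S => ∃ P ∈ S, ∃ Q ∈ S, ∃ R ∈ S,
        P ≠ Q ∧ P ≠ R ∧ Q ≠ R ∧
        Collinear ℝ ({toR P, toR Q, toR R} : Set (ℝ × ℝ))).card
      ≤ (K ^ 2).choose (n - 1) * (n - 1).choose 2 * K := by
  calc _ ≤ #(((grid K).powersetCard (n - 1)).biUnion fun T =>
          (T.powersetCard 2).biUnion fun A => (collinearExtensions K A).image (insert · T)) :=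
        Finset.card_le_card (filter_collinear_subset_biUnion n K)
    _ ≤ ∑ T ∈ (grid K).powersetCard (n - 1), ∑ A ∈ T.powersetCard 2, #(collinearExtensions K A) :=
        Finset.card_biUnion_le.trans <| Finset.sum_le_sum fun T _ =>
          Finset.card_biUnion_le.trans <| Finset.sum_le_sum fun A _ => Finset.card_image_le
    _ ≤ ∑ T ∈ (grid K).powersetCard (n - 1), ∑ A ∈ T.powersetCard 2, K :=
        Finset.sum_le_sum fun T _ => Finset.sum_le_sum fun A hA =>
          card_collinearExtensions_le K (Finset.mem_powersetCard.1 hA).2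
    _ = (K ^ 2).choose (n - 1) * (n - 1).choose 2 * K := by
        rw [Finset.sum_congr rfl fun T hT => by
          rw [Finset.sum_const, Finset.card_powersetCard, (Finset.mem_powersetCard.1 hT).2]]
        rw [Finset.sum_const, Finset.card_powersetCard, card_grid, smul_eq_mul, smul_eq_mul,
          mul_assoc]

open Classical in
theorem count_collinear_subsets_le (n K : ℕ) (hn : 3 ≤ n) (hK : 2 ≤ K) :
    (((grid K).powersetCard n).filter fun S => ∃ P ∈ S, ∃ Q ∈ S, ∃ R ∈ S,
        P ≠ Q ∧ P ≠ R ∧ Q ≠ R ∧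
        Collinear ℝ ({toR P, toR Q, toR R} : Set (ℝ × ℝ))).card
      ≤ (K ^ 2).choose (n - 1) * (n - 1).choose 2 * K :=
  count_collinear_subsets_le_general n K
end
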